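/- arXiv:1611.01720 — 5 statements merged into one kernel-verified Lean document; each statement's English description precedes it below -/
import Mathlib

section
/- Let M be a finitely generated torsion-free abelian group, f a positive integer, F an automorphism of M with F^f = id, and let q > 1 be a real number. Define, for complex s, the local L-factor L(s) := det(1 − q^{−s}·F_ℂ | M_ℂ)^{−1}, where q^{−s} := exp(−s·log q) and F_ℂ is the automorphism induced by F on M_ℂ := M ⊗_ℤ ℂ. Then L has order of vanishing −r at s = 0, where r := rank_ℤ M^F: precisely, there exists a nonzero complex number c such that det(1 − q^{−s}·F_ℂ | M_ℂ)/s^r tends to c as s tends to 0 through nonzero complex numbers. -/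
open TensorProduct Filter

lemma det_prodMap {K W : Type*} [AddCommGroup K] [AddCommGroup W] [Module ℂ K] [Module ℂ W]
    [FiniteDimensional ℂ K] [FiniteDimensional ℂ W] (φ : K →ₗ[ℂ] K) (ψ : W →ₗ[ℂ] W) :
    LinearMap.det (φ.prodMap ψ) = LinearMap.det φ * LinearMap.det ψ := by
  classical
  let bK := Module.finBasis ℂ K
  let bW := Module.finBasis ℂ W
  rw [← LinearMap.det_toMatrix (bK.prod bW), LinearMap.toMatrix_prodMap bK bW φ ψ,
    Matrix.det_fromBlocks_zero₂₁, LinearMap.det_toMatrix, LinearMap.det_toMatrix]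

lemma cont_det {W : Type*} [AddCommGroup W] [Module ℂ W] [FiniteDimensional ℂ W]
    (S : W →ₗ[ℂ] W) : Continuous fun u : ℂ => LinearMap.det (1 - u • S) := by
  classical
  let b := Module.finBasis ℂ W
  let A := LinearMap.toMatrix b b S
  have h : ∀ u : ℂ, LinearMap.det (1 - u • S) = Matrix.det (1 - u • A) := by
    intro u
    rw [← LinearMap.det_toMatrix b, map_sub, map_smul, LinearMap.toMatrix_one]
  simp only [h]
  exact Continuous.matrix_det (continuous_const.sub (continuous_id.smul continuous_const))

lemma core {V : Type*} [AddCommGroup V] [Module ℂ V] [FiniteDimensional ℂ V]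
    (T : V →ₗ[ℂ] V) (f : ℕ) (hf : 0 < f) (hT : T ^ f = 1) :
    ∃ G : ℂ → ℂ, Continuous G ∧ G 1 ≠ 0 ∧
      ∀ u : ℂ, LinearMap.det (1 - u • T) =
        (1 - u) ^ (Module.finrank ℂ (LinearMap.ker (T - 1))) * G u := by
  classical
  set K := LinearMap.ker (T - 1) with hKdef
  have hfC : (f : ℂ) ≠ 0 := Nat.cast_ne_zero.mpr hf.ne'
  set π : V →ₗ[ℂ] V := (f : ℂ)⁻¹ • (∑ i ∈ Finset.range f, T ^ i) with hπdef
  have hcomm : ∀ i : ℕ, T * T ^ i = T ^ i * T := fun i => (Commute.self_pow T i).eq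
  have hsum : T * (∑ i ∈ Finset.range f, T ^ i) = ∑ i ∈ Finset.range f, T ^ i := by
    rw [Finset.mul_sum]
    have h1 : ∀ i ∈ Finset.range f, T * T ^ i = T ^ (i + 1) := by
      intro i _; rw [← pow_succ']
    rw [Finset.sum_congr rfl h1]
    have h2 : ∑ i ∈ Finset.range (f + 1), T ^ i
        = (∑ i ∈ Finset.range f, T ^ (i + 1)) + T ^ 0 := Finset.sum_range_succ' _ f
    have h3 : ∑ i ∈ Finset.range (f + 1), T ^ i
        = (∑ i ∈ Finset.range f, T ^ i) + T ^ f := Finset.sum_range_succ _ f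
    rw [h3, hT, pow_zero] at h2
    exact (add_right_cancel h2.symm)
  have hTπ : T * π = π := by
    rw [hπdef, mul_smul_comm, hsum]
  have hπT : π * T = T * π := by
    rw [hπdef, smul_mul_assoc, mul_smul_comm, Finset.sum_mul, Finset.mul_sum]
    congr 1
    exact Finset.sum_congr rfl fun i _ => (hcomm i).symm
  -- π fixes K pointwise
  have hmemK : ∀ x : V, T x = x → x ∈ K := by
    intro x hx; simp [hKdef, LinearMap.mem_ker, LinearMap.sub_apply, hx]
  have hKfix : ∀ x ∈ K, T x = x := by
    intro x hx
    have : (T - 1) x = 0 := hx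
    simpa [sub_eq_zero, LinearMap.sub_apply] using this
  have hπfix : ∀ x ∈ K, π x = x := by
    intro x hx
    have hpow : ∀ i : ℕ, (T ^ i) x = x := by
      intro i; induction i with
      | zero => simp
      | succ n ih => rw [pow_succ, Module.End.mul_apply, hKfix x hx, ih]
    have : (∑ i ∈ Finset.range f, T ^ i) x = (f : ℂ) • x := by
      rw [LinearMap.sum_apply, Finset.sum_congr rfl (fun i _ => hpow i),
        Finset.sum_const, Finset.card_range, ← Nat.cast_smul_eq_nsmul ℂ]
    rw [hπdef, LinearMap.smul_apply, this, smul_smul, inv_mul_cancel₀ hfC, one_smul]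
  have hmem : ∀ x : V, π x ∈ K := by
    intro x
    apply hmemK
    have := LinearMap.congr_fun hTπ x
    simpa using this
  set p : V →ₗ[ℂ] K := π.codRestrict K hmem with hpdef
  have hproj : ∀ x : K, p x = x := by
    intro x; ext; simpa [hpdef] using hπfix x x.2
  have hcompl : IsCompl K (LinearMap.ker p) := LinearMap.isCompl_of_proj hproj
  set W := LinearMap.ker p with hWdef
  have hWker : ∀ x : V, x ∈ W ↔ π x = 0 := by
    intro x
    constructor
    · intro hx; have : p x = 0 := hx; simpa [hpdef] using congrArg Subtype.val this
    · intro hx; show p x = 0; ext; simpa [hpdef] using hx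
  have hKinv : ∀ x ∈ K, T x ∈ K := by
    intro x hx; rw [hKfix x hx]; exact hx
  have hWinv : ∀ x ∈ W, T x ∈ W := by
    intro x hx
    rw [hWker] at hx ⊢
    have := LinearMap.congr_fun hπT x
    simp only [Module.End.mul_apply] at this
    rw [this, hx, map_zero]
  set TK := T.restrict hKinv with hTKdef
  set TW := T.restrict hWinv with hTWdef
  have hTK1 : TK = 1 := by
    ext x; exact hKfix x x.2
  set e := Submodule.prodEquivOfIsCompl K W hcompl with hedef
  have hTe : T ∘ₗ (e : K × W →ₗ[ℂ] V) = (e : K × W →ₗ[ℂ] V) ∘ₗ (TK.prodMap TW) := by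
    ext x
    · simp [hedef, Submodule.coe_prodEquivOfIsCompl', LinearMap.restrict_apply, hTKdef]
    · simp [hedef, Submodule.coe_prodEquivOfIsCompl', LinearMap.restrict_apply, hTWdef]
  have hdet : ∀ u : ℂ, LinearMap.det (1 - u • T)
      = LinearMap.det (1 - u • TK) * LinearMap.det (1 - u • TW) := by
    intro u
    have hcomp : (1 - u • T) ∘ₗ (e : K × W →ₗ[ℂ] V)
        = (e : K × W →ₗ[ℂ] V) ∘ₗ ((1 - u • TK).prodMap (1 - u • TW)) := by
      have hprod : (1 - u • TK).prodMap (1 - u • TW) = 1 - u • (TK.prodMap TW) := by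
        ext x <;> simp
      rw [hprod]
      apply LinearMap.ext
      intro x
      have hx := LinearMap.congr_fun hTe x
      simp only [LinearMap.comp_apply, LinearMap.sub_apply, Module.End.one_apply,
        LinearMap.smul_apply, map_sub, map_smul] at hx ⊢
      rw [hx]
    have : (1 - u • T) = (e : K × W →ₗ[ℂ] V) ∘ₗ ((1 - u • TK).prodMap (1 - u • TW))
        ∘ₗ (e.symm : V →ₗ[ℂ] K × W) := by
      have hee : (e : K × W →ₗ[ℂ] V) ∘ₗ (e.symm : V →ₗ[ℂ] K × W) = LinearMap.id := by
        ext x; simp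
      rw [← LinearMap.comp_assoc, ← hcomp, LinearMap.comp_assoc, hee, LinearMap.comp_id]
    rw [this]
    rw [LinearMap.det_conj]
    exact det_prodMap _ _
  have hdetK : ∀ u : ℂ, LinearMap.det (1 - u • TK) = (1 - u) ^ (Module.finrank ℂ K) := by
    intro u
    have h1 : (1 : ↥K →ₗ[ℂ] ↥K) - u • TK = (1 - u) • (1 : ↥K →ₗ[ℂ] ↥K) := by
      rw [hTK1]; ext x; simp [sub_smul]
    rw [h1, LinearMap.det_smul]
    simp
  refine ⟨fun u => LinearMap.det (1 - u • TW), ?_, ?_, ?_⟩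
  · exact cont_det TW
  · -- nonvanishing at 1
    intro h0
    have hlt := LinearMap.bot_lt_ker_of_det_eq_zero h0
    rw [bot_lt_iff_ne_bot, Submodule.ne_bot_iff] at hlt
    obtain ⟨w, hw, hwne⟩ := hlt
    have hw' : w = TW w := by
      have : (1 - (1:ℂ) • TW) w = 0 := hw
      simpa [sub_eq_zero] using this
    have hwK : (w : V) ∈ K := by
      apply hmemK
      calc T (w : V) = ((TW w : W) : V) := (LinearMap.restrict_coe_apply T hWinv w).symm
        _ = (w : V) := by rw [← hw']
    have : (w : V) ∈ K ⊓ W := ⟨hwK, w.2⟩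
    rw [hcompl.inf_eq_bot] at this
    exact hwne (Subtype.ext this)
  · intro u
    rw [hdet u, hdetK u]


lemma keylim (L : ℂ) : Filter.Tendsto (fun s : ℂ => (1 - Complex.exp (-s * L))/s)
    (nhdsWithin 0 {0}ᶜ) (nhds L) := by
  have hd : HasDerivAt (fun s : ℂ => Complex.exp (-s * L)) (-L) 0 := by
    have h1 : HasDerivAt (fun s : ℂ => -s * L) (-L) 0 := by
      simpa using ((hasDerivAt_id (0:ℂ)).neg.mul_const L)
    have := h1.cexp
    simpa using this
  have h0 := hasDerivAt_iff_tendsto_slope.mp hd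
  have h2 : Filter.Tendsto (fun s : ℂ => (Complex.exp (-s*L) - 1)/s) (nhdsWithin 0 {0}ᶜ) (nhds (-L)) := by
    refine h0.congr ?_
    intro s
    simp [slope_def_field]
  have h3 : Filter.Tendsto (fun s : ℂ => -((Complex.exp (-s*L) - 1)/s)) (nhdsWithin 0 {0}ᶜ) (nhds L) := by
    simpa using h2.neg
  exact h3.congr fun s => by rw [← neg_div, neg_sub]


/-- **Order of vanishing of the local L-factor at `s = 0`.**
`M` is a finitely generated torsion-free abelian group (a finite `ℤ`-module with
`NoZeroSMulDivisors ℤ M`), `F` an automorphism of `M` with `F ^ f = 1` (`f > 0`), and `q > 1`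
a real number.  The local L-factor is `L s = (det (1 - q⁻ˢ • F_ℂ | M ⊗ ℂ))⁻¹` where
`q⁻ˢ = exp (-s * log q)`.  Then `det (1 - q⁻ˢ • F_ℂ) / s ^ r` tends to a nonzero constant as
`s → 0`, `s ≠ 0`, where `r = rank_ℤ M^F = finrank ℤ (ker (F - id))`; i.e. `L` has order of
vanishing `-r` at `s = 0`. -/
theorem stmt_0 (M : Type) [AddCommGroup M] [Module.Finite ℤ M] [NoZeroSMulDivisors ℤ M]
    (f : ℕ) (hf : 0 < f) (F : M ≃ₗ[ℤ] M) (hF : F ^ f = 1)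
    (q : ℝ) (hq : 1 < q) :
    ∃ c : ℂ, c ≠ 0 ∧
      Tendsto (fun s : ℂ =>
          LinearMap.det ((1 : (ℂ ⊗[ℤ] M) →ₗ[ℂ] ℂ ⊗[ℤ] M) -
              Complex.exp (-s * (Real.log q : ℂ)) •
                LinearMap.baseChange ℂ (F : M →ₗ[ℤ] M)) /
            s ^ Module.finrank ℤ (LinearMap.ker ((F : M →ₗ[ℤ] M) - LinearMap.id)))
        (nhdsWithin 0 {0}ᶜ) (nhds c) := by
  have flatZC : Module.Flat ℤ ℂ := by
    have : Module.Flat ℤ ℚ := IsLocalization.flat ℚ (nonZeroDivisors ℤ)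
    exact Module.Flat.trans ℤ ℚ ℂ
  set g : M →ₗ[ℤ] M := (F : M →ₗ[ℤ] M) - LinearMap.id with hg
  set r := Module.finrank ℤ (LinearMap.ker g) with hr
  set T := LinearMap.baseChange ℂ (F : M →ₗ[ℤ] M) with hTdef
  have hFf : ((F : M →ₗ[ℤ] M)) ^ f = LinearMap.id := by
    ext x
    have h1 : (F ^ f) x = x := by rw [hF]; rfl
    rw [LinearEquiv.pow_apply] at h1
    simp [Module.End.pow_apply, h1]
  have hTf : T ^ f = 1 := by
    rw [hTdef, ← LinearMap.baseChange_pow, hFf, LinearMap.baseChange_id]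
    rfl
  have hker : Module.finrank ℂ (LinearMap.ker (T - 1)) = r := by
    have h1 : T - 1 = LinearMap.baseChange ℂ g := by
      rw [hg, LinearMap.baseChange_sub, LinearMap.baseChange_id]
      rfl
    rw [h1]
    have e : ℂ ⊗[ℤ] LinearMap.ker g ≃ₗ[ℂ] LinearMap.ker (LinearMap.baseChange ℂ g) :=
      LinearMap.tensorKerEquiv ℂ ℂ g
    rw [← e.finrank_eq, Module.finrank_baseChange]
  obtain ⟨G, hGc, hG1, hdet⟩ := core T f hf hTf
  set L : ℂ := (Real.log q : ℂ) with hL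
  have hLne : L ≠ 0 := by
    simp only [hL, ne_eq, Complex.ofReal_eq_zero]
    exact (Real.log_pos hq).ne'
  refine ⟨L ^ r * G 1, mul_ne_zero (pow_ne_zero _ hLne) hG1, ?_⟩
  have h2 : Tendsto (fun s : ℂ => (1 - Complex.exp (-s * L))/s) (nhdsWithin 0 {0}ᶜ) (nhds L) :=
    keylim L
  have h3 : Tendsto (fun s : ℂ => G (Complex.exp (-s * L))) (nhdsWithin 0 {0}ᶜ) (nhds (G 1)) := by
    have hx : Tendsto (fun s : ℂ => Complex.exp (-s * L)) (nhdsWithin 0 {0}ᶜ) (nhds 1) := by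
      have hc : Continuous (fun s : ℂ => Complex.exp (-s * L)) := by continuity
      have := hc.tendsto 0
      simp only [neg_zero, zero_mul, Complex.exp_zero] at this
      exact this.mono_left nhdsWithin_le_nhds
    exact (hGc.tendsto 1).comp hx
  have hmain := (h2.pow r).mul h3
  refine hmain.congr' ?_
  filter_upwards [self_mem_nhdsWithin] with s hs
  have hs0 : s ≠ 0 := hs
  rw [hdet, hker]
  rw [div_pow]
  field_simp
end

section
/- Let M be a finitely generated torsion-free abelian group, f a positive integer, and F an automorphism of M with F^f = id. Set N := ∑_{n=0}^{f−1} F^n : M → M, W' := ker N, and r := rank_ℤ M^F. Then the subgroups (1−F)(W') ⊆ W', (1−F)(M) ⊆ W', and N(M) ⊆ M^F all have finite index, and [W' : (1−F)(W')] · [M^F : N(M)] = f^r · [W' : (1−F)(M)]. -/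
/-!
Write `N = ∑_{n<f} Fⁿ`, `W' = ker N` and `K = M^F`. Since `(1 - F)M ≅ M/K` and `N(M) ≅ M/W'`,
both `[(1 - F)M : (1 - F)W']` and `[N(M) : N(K)]` equal `[M : W' + K]`. On `K` the map `N` is
multiplication by `f`, so `[K : N(K)] = f ^ r`, and the identity follows by comparing the towers
`(1 - F)W' ⊆ (1 - F)M ⊆ W'` and `N(K) ⊆ N(M) ⊆ K`. The indices are finite because `f` kills
`K/N(M)` (as `N(K) = fK`) and `W'/(1 - F)W'` (as `(1 - F) ∑_{n<f} ∑_{k<n} Fᵏ = f - N`).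
-/

/-- The index `[Q : P]` of a submodule `P` inside a submodule `Q` (the cardinality of `Q/(P ∩ Q)`;
it is the honest index when `P ≤ Q`). -/
noncomputable def relIndex {M : Type} [AddCommGroup M] (P Q : Submodule ℤ M) : ℕ :=
  Nat.card (Q ⧸ P.comap Q.subtype)

/-- `P` is a finite-index subgroup of `Q`. -/
def FiniteIndexIn {M : Type} [AddCommGroup M] (P Q : Submodule ℤ M) : Prop :=
  P ≤ Q ∧ Finite (Q ⧸ P.comap Q.subtype)

open Module LinearMap

section Index

variable {M M' : Type} [AddCommGroup M] [AddCommGroup M']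

theorem relIndex_eq_relIndex_toAddSubgroup (P Q : Submodule ℤ M) :
    relIndex P Q = P.toAddSubgroup.relIndex Q.toAddSubgroup :=
  rfl

theorem relIndex_mul_relIndex {P Q R : Submodule ℤ M} (hPQ : P ≤ Q) (hQR : Q ≤ R) :
    relIndex P Q * relIndex Q R = relIndex P R := by
  simp only [relIndex_eq_relIndex_toAddSubgroup]
  exact AddSubgroup.relIndex_mul_relIndex _ _ _ ((Submodule.toAddSubgroup_le _ _).mpr hPQ)
    ((Submodule.toAddSubgroup_le _ _).mpr hQR)

theorem relIndex_map_range (g : M →ₗ[ℤ] M') (P : Submodule ℤ M) :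
    relIndex (P.map g) (range g) = relIndex (P ⊔ ker g) ⊤ := by
  rw [relIndex_eq_relIndex_toAddSubgroup, relIndex_eq_relIndex_toAddSubgroup,
    ← Submodule.comap_map_eq]
  have h := AddSubgroup.relIndex_comap (P.map g).toAddSubgroup g.toAddMonoidHom ⊤
  rw [← AddMonoidHom.range_eq_map] at h
  exact h.symm

theorem finiteIndexIn_iff {P Q : Submodule ℤ M} :
    FiniteIndexIn P Q ↔ P ≤ Q ∧ relIndex P Q ≠ 0 := by
  rw [FiniteIndexIn, relIndex, Nat.card_ne_zero]
  exact and_congr_right fun _ ↦ (and_iff_right ⟨0⟩).symm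

variable [Module.Finite ℤ M] [NoZeroSMulDivisors ℤ M]

theorem relIndex_map_of_forall_eq_nsmul {K : Submodule ℤ M} {g : Module.End ℤ M} {n : ℕ}
    (hg : ∀ x ∈ K, g x = n • x) : relIndex (K.map g) K = n ^ finrank ℤ K := by
  have hmap : (K.map g).toAddSubgroup = K.toAddSubgroup.map (nsmulAddMonoidHom n) := by
    ext y
    simp only [Submodule.map_toAddSubgroup, AddSubgroup.mem_map]
    constructor
    · rintro ⟨x, hx, rfl⟩
      exact ⟨x, hx, (hg x hx).symm⟩
    · rintro ⟨x, hx, rfl⟩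
      exact ⟨x, hx, hg x hx⟩
  rw [relIndex_eq_relIndex_toAddSubgroup, hmap]
  exact AddSubgroup.relIndex_map_nsmul n K.toAddSubgroup

theorem finiteIndexIn_of_nsmul_mem {P Q : Submodule ℤ M} {n : ℕ} (hPQ : P ≤ Q) (hn : n ≠ 0)
    (h : ∀ x ∈ Q, n • x ∈ P) : FiniteIndexIn P Q := by
  have hle : Q.map (n • 1 : Module.End ℤ M) ≤ P := by
    rintro _ ⟨x, hx, rfl⟩
    exact h x hx
  have hdvd : relIndex P Q ∣ relIndex (Q.map (n • 1 : Module.End ℤ M)) Q := by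
    simp only [relIndex_eq_relIndex_toAddSubgroup]
    exact AddSubgroup.relIndex_dvd_of_le_left _ ((Submodule.toAddSubgroup_le _ _).mpr hle)
  rw [relIndex_map_of_forall_eq_nsmul fun x _ ↦ LinearMap.smul_apply n 1 x] at hdvd
  exact finiteIndexIn_iff.mpr ⟨hPQ, ne_zero_of_dvd_ne_zero (pow_ne_zero _ hn) hdvd⟩

end Index

section GeomSum

variable {M : Type} [AddCommGroup M] (φ : Module.End ℤ M) {f : ℕ}

theorem geomSum_apply_of_mem_ker_sub_one {x : M} (hx : x ∈ ker (φ - 1)) :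
    (∑ n ∈ Finset.range f, φ ^ n) x = f • x := by
  have hφx : φ x = x := sub_eq_zero.mp hx
  have hpow : ∀ n : ℕ, (φ ^ n) x = x := fun n ↦ by
    rw [Module.End.pow_apply, Function.iterate_fixed hφx]
  simp only [LinearMap.sum_apply, hpow, Finset.sum_const, Finset.card_range]

theorem range_one_sub_le_ker_geomSum (hφ : φ ^ f = 1) :
    range (1 - φ) ≤ ker (∑ n ∈ Finset.range f, φ ^ n) := by
  rw [range_le_ker_iff, ← Module.End.mul_eq_comp, geom_sum_mul_neg, hφ, sub_self]

theorem range_geomSum_le_ker_sub_one (hφ : φ ^ f = 1) :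
    range (∑ n ∈ Finset.range f, φ ^ n) ≤ ker (φ - 1) := by
  rw [range_le_ker_iff, ← Module.End.mul_eq_comp, mul_geom_sum, hφ, sub_self]

theorem nsmul_mem_map_one_sub_ker_geomSum {x : M} (hx : x ∈ ker (∑ n ∈ Finset.range f, φ ^ n)) :
    f • x ∈ (ker (∑ n ∈ Finset.range f, φ ^ n)).map (1 - φ) := by
  set N := ∑ n ∈ Finset.range f, φ ^ n
  set T := ∑ n ∈ Finset.range f, ∑ k ∈ Finset.range n, φ ^ k
  have hT : (1 - φ) * T = f • 1 - N := by
    rw [Finset.mul_sum]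
    simp only [mul_neg_geom_sum, Finset.sum_sub_distrib, Finset.sum_const, Finset.card_range, N]
  have hNT : Commute N T :=
    .sum_left _ _ _ fun n _ ↦ .sum_right _ _ _ fun m _ ↦ .sum_right _ _ _ fun k _ ↦
      (Commute.refl φ).pow_pow n k
  refine ⟨T x, ?_, ?_⟩
  · change (N * T) x = 0
    rw [hNT.eq, Module.End.mul_apply, mem_ker.mp hx, map_zero]
  · change ((1 - φ) * T) x = f • x
    rw [hT, LinearMap.sub_apply, LinearMap.smul_apply, Module.End.one_apply, mem_ker.mp hx, sub_zero]

theorem relIndex_mul_relIndex_geomSum [Module.Finite ℤ M] [NoZeroSMulDivisors ℤ M]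
    (hφ : φ ^ f = 1) :
    relIndex ((ker (∑ n ∈ Finset.range f, φ ^ n)).map (1 - φ)) (ker (∑ n ∈ Finset.range f, φ ^ n)) *
        relIndex (range (∑ n ∈ Finset.range f, φ ^ n)) (ker (φ - 1)) =
      f ^ finrank ℤ (ker (φ - 1)) *
        relIndex (range (1 - φ)) (ker (∑ n ∈ Finset.range f, φ ^ n)) := by
  set N := ∑ n ∈ Finset.range f, φ ^ n
  have hker : ker (1 - φ) = ker (φ - 1) := by rw [← neg_sub, ker_neg]
  have hmap_range : relIndex ((ker N).map (1 - φ)) (range (1 - φ)) =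
      relIndex ((ker (φ - 1)).map N) (range N) := by
    rw [relIndex_map_range, relIndex_map_range, hker, sup_comm]
  have hfK : relIndex ((ker (φ - 1)).map N) (ker (φ - 1)) = f ^ finrank ℤ (ker (φ - 1)) :=
    relIndex_map_of_forall_eq_nsmul fun x hx ↦ geomSum_apply_of_mem_ker_sub_one φ hx
  rw [← relIndex_mul_relIndex map_le_range (range_one_sub_le_ker_geomSum φ hφ), ← hfK,
    ← relIndex_mul_relIndex map_le_range (range_geomSum_le_ker_sub_one φ hφ), hmap_range]
  ring

end GeomSum

/-- **The key index identity for the Herbrand-quotient computation.**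
`M` is a finitely generated torsion-free abelian group, `F` an automorphism with `F ^ f = 1`
(`f > 0`).  With `N = ∑_{n=0}^{f-1} Fⁿ`, `W' = ker N`, `M^F = ker (F - 1)` and
`r = rank_ℤ M^F`:  the subgroups `(1-F)(W') ⊆ W'`, `(1-F)(M) ⊆ W'` and `N(M) ⊆ M^F` all have
finite index, and `[W' : (1-F)W'] * [M^F : N(M)] = f ^ r * [W' : (1-F)M]`. -/
theorem stmt_2 (M : Type) [AddCommGroup M] [Module.Finite ℤ M] [NoZeroSMulDivisors ℤ M]
    (f : ℕ) (hf : 0 < f) (F : M ≃ₗ[ℤ] M) (hF : F ^ f = 1) :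
    FiniteIndexIn
        (Submodule.map (LinearMap.id - (F : M →ₗ[ℤ] M))
          (LinearMap.ker (∑ n ∈ Finset.range f, (F : M →ₗ[ℤ] M) ^ n)))
        (LinearMap.ker (∑ n ∈ Finset.range f, (F : M →ₗ[ℤ] M) ^ n)) ∧
    FiniteIndexIn (LinearMap.range (LinearMap.id - (F : M →ₗ[ℤ] M)))
        (LinearMap.ker (∑ n ∈ Finset.range f, (F : M →ₗ[ℤ] M) ^ n)) ∧
    FiniteIndexIn (LinearMap.range (∑ n ∈ Finset.range f, (F : M →ₗ[ℤ] M) ^ n))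
        (LinearMap.ker ((F : M →ₗ[ℤ] M) - LinearMap.id)) ∧
    relIndex
          (Submodule.map (LinearMap.id - (F : M →ₗ[ℤ] M))
            (LinearMap.ker (∑ n ∈ Finset.range f, (F : M →ₗ[ℤ] M) ^ n)))
          (LinearMap.ker (∑ n ∈ Finset.range f, (F : M →ₗ[ℤ] M) ^ n)) *
        relIndex (LinearMap.range (∑ n ∈ Finset.range f, (F : M →ₗ[ℤ] M) ^ n))
          (LinearMap.ker ((F : M →ₗ[ℤ] M) - LinearMap.id)) =
      f ^ Module.finrank ℤ (LinearMap.ker ((F : M →ₗ[ℤ] M) - LinearMap.id)) *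
        relIndex (LinearMap.range (LinearMap.id - (F : M →ₗ[ℤ] M)))
          (LinearMap.ker (∑ n ∈ Finset.range f, (F : M →ₗ[ℤ] M) ^ n)) := by
  set φ : Module.End ℤ M := (F : M →ₗ[ℤ] M)
  have hφ : φ ^ f = 1 := by
    ext x
    simp [φ, Module.End.pow_apply, ← LinearEquiv.pow_apply, hF]
  simp only [← Module.End.one_eq_id]
  have hW' := range_one_sub_le_ker_geomSum φ hφ
  refine ⟨finiteIndexIn_of_nsmul_mem (map_le_range.trans hW') hf.ne'
      fun x hx ↦ nsmul_mem_map_one_sub_ker_geomSum φ hx,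
    finiteIndexIn_of_nsmul_mem hW' hf.ne'
      fun x hx ↦ map_le_range (nsmul_mem_map_one_sub_ker_geomSum φ hx),
    finiteIndexIn_of_nsmul_mem (range_geomSum_le_ker_sub_one φ hφ) hf.ne' fun x hx ↦ ?_,
    relIndex_mul_relIndex_geomSum φ hφ⟩
  rw [← geomSum_apply_of_mem_ker_sub_one φ hx]
  exact mem_range_self _ x
end

section
/- Let W be a finitely generated torsion-free abelian group, f a positive integer, and F an automorphism of W such that F^f = id and ∑_{n=0}^{f−1} F^n = 0 as an endomorphism of W. Then 1−F is injective on W, the subgroup (1−F)(W) has finite index in W, and det((1−F)_ℂ | W ⊗_ℤ ℂ) = [W : (1−F)(W)]; in particular this determinant is a positive integer. -/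
/-!
Summing `(∑_{k<n} Fᵏ)(1 - F) = 1 - Fⁿ` over `n < f` gives `Q (1 - F) = f` for a polynomial `Q`
in `F`, so `1 - F` is injective on the torsion-free group `W`, and the index of its image is
`|det (1 - F)|`. For the sign, `∑ Fⁿ = 0` forces `F ^ f = 1`, so for `0 ≤ t < 1` the map
`1 - tF` has the left inverse `(1 - t ^ f)⁻¹ ∑ (tF)ⁿ`, while at `t = 1` it is invertible over `ℝ`
because of `Q`. Hence `t ↦ det (1 - tF)` has no zero on `[0, 1]`, and it is `1` at `t = 0`.
-/

open TensorProduct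

open Finset in
theorem sum_range_geom_sum_mul_one_sub {R : Type*} [Ring R] (x : R) (f : ℕ) :
    (∑ n ∈ range f, ∑ k ∈ range n, x ^ k) * (1 - x) = f - ∑ n ∈ range f, x ^ n := by
  rw [sum_mul]
  simp only [geom_sum_mul_neg, sum_sub_distrib, sum_const, card_range, nsmul_one]

theorem pow_eq_one_of_geom_sum_eq_zero {R : Type*} [Ring R] {x : R} {f : ℕ}
    (hN : ∑ n ∈ Finset.range f, x ^ n = 0) : x ^ f = 1 := by
  have h := geom_sum_mul_neg x f
  rw [hN, zero_mul] at h
  exact (sub_eq_zero.1 h.symm).symm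

theorem Module.End.injective_one_sub_of_sum_pow_eq_zero {R M : Type*} [Ring R] [AddCommGroup M]
    [Module R M] [NoZeroSMulDivisors ℤ M] {F : Module.End R M} {f : ℕ} (hf : 0 < f)
    (hN : ∑ n ∈ Finset.range f, F ^ n = 0) : Function.Injective ⇑(1 - F) := by
  rw [← LinearMap.ker_eq_bot, Submodule.eq_bot_iff]
  intro x hx
  have hfx : (f : ℤ) • x = 0 := by
    rw [natCast_zsmul, ← Module.End.natCast_apply (R := R), ← sub_zero (f : Module.End R M), ← hN,
      ← sum_range_geom_sum_mul_one_sub, Module.End.mul_apply, LinearMap.mem_ker.1 hx, map_zero]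
  exact (smul_eq_zero.1 hfx).resolve_left (by exact_mod_cast hf.ne')

theorem Matrix.det_ne_zero_of_mul_eq_smul_one {ι K : Type*} [Fintype ι] [DecidableEq ι] [Field K]
    {A S : Matrix ι ι K} {c : K} (hc : c ≠ 0) (h : S * A = c • 1) : A.det ≠ 0 :=
  Matrix.det_ne_zero_of_left_inverse (B := c⁻¹ • S) <| by
    rw [smul_mul_assoc, h, smul_smul, inv_mul_cancel₀ hc, one_smul]

theorem Matrix.det_one_sub_smul_ne_zero {ι : Type*} [Fintype ι] [DecidableEq ι]
    {B : Matrix ι ι ℝ} {f : ℕ} (hf : 0 < f) (hN : ∑ n ∈ Finset.range f, B ^ n = 0) {t : ℝ}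
    (ht : t ∈ Set.Icc (0 : ℝ) 1) : (1 - t • B).det ≠ 0 := by
  rcases ht.2.eq_or_lt with rfl | ht1
  · rw [one_smul]
    refine det_ne_zero_of_mul_eq_smul_one
      (S := ∑ n ∈ Finset.range f, ∑ k ∈ Finset.range n, B ^ k) (c := f) (by exact_mod_cast hf.ne') ?_
    rw [sum_range_geom_sum_mul_one_sub, hN, sub_zero, Nat.cast_smul_eq_nsmul, nsmul_one]
  · refine det_ne_zero_of_mul_eq_smul_one
      (S := ∑ n ∈ Finset.range f, (t • B) ^ n) (c := 1 - t ^ f) ?_ ?_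
    · exact sub_ne_zero.2 (pow_lt_one₀ ht.1 ht1 hf.ne').ne'
    · rw [geom_sum_mul_neg, smul_pow, pow_eq_one_of_geom_sum_eq_zero hN, sub_smul, one_smul]

theorem Matrix.det_one_sub_pos {ι : Type*} [Fintype ι] [DecidableEq ι]
    {B : Matrix ι ι ℝ} {f : ℕ} (hf : 0 < f) (hN : ∑ n ∈ Finset.range f, B ^ n = 0) :
    0 < (1 - B).det := by
  set g : ℝ → ℝ := fun t ↦ (1 - t • B).det
  have hg : Continuous g := (continuous_const.sub (continuous_id.smul continuous_const)).matrix_det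
  by_contra! hle
  obtain ⟨t, ht, hgt⟩ := intermediate_value_Icc' zero_le_one hg.continuousOn
    (show (0 : ℝ) ∈ Set.Icc (g 1) (g 0) by simpa [g] using hle)
  exact det_one_sub_smul_ne_zero hf hN ht hgt

theorem LinearMap.natCard_quotient_range_eq_natAbs_det {M : Type*} [AddCommGroup M]
    [Module.Free ℤ M] [Module.Finite ℤ M] {φ : Module.End ℤ M} (hφ : Function.Injective φ) :
    Nat.card (M ⧸ LinearMap.range φ) = (LinearMap.det φ).natAbs :=
  (Submodule.natAbs_det_equiv _ (LinearEquiv.ofInjective φ hφ)).symm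

theorem LinearMap.det_one_sub_pos {M : Type*} [AddCommGroup M] [Module.Free ℤ M]
    [Module.Finite ℤ M] {F : Module.End ℤ M} {f : ℕ} (hf : 0 < f)
    (hN : ∑ n ∈ Finset.range f, F ^ n = 0) : 0 < LinearMap.det (1 - F) := by
  let b := Module.Free.chooseBasis ℤ M
  let ρ : Module.End ℤ M →+* Matrix _ _ ℝ :=
    (Int.castRingHom ℝ).mapMatrix.comp (LinearMap.toMatrixAlgEquiv b).toRingHom
  have hdet : ((LinearMap.det (1 - F) : ℤ) : ℝ) = (1 - ρ F).det := by
    rw [← map_one ρ, ← map_sub]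
    change _ = ((Int.castRingHom ℝ).mapMatrix (LinearMap.toMatrix b b (1 - F))).det
    rw [← RingHom.map_det, LinearMap.det_toMatrix]
    rfl
  have hρN : ∑ n ∈ Finset.range f, ρ F ^ n = 0 := by simp only [← map_pow, ← map_sum, hN, map_zero]
  rw [← Int.cast_pos (R := ℝ), hdet]
  exact Matrix.det_one_sub_pos hf hρN

theorem stmt_3_general (W : Type) [AddCommGroup W] [Module.Finite ℤ W] [NoZeroSMulDivisors ℤ W]
    (f : ℕ) (hf : 0 < f) (F : W ≃ₗ[ℤ] W)
    (hN : (∑ n ∈ Finset.range f, (F : W →ₗ[ℤ] W) ^ n) = 0) :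
    Function.Injective ⇑((LinearMap.id : W →ₗ[ℤ] W) - (F : W →ₗ[ℤ] W)) ∧
    Finite (W ⧸ LinearMap.range (LinearMap.id - (F : W →ₗ[ℤ] W))) ∧
    0 < Nat.card (W ⧸ LinearMap.range (LinearMap.id - (F : W →ₗ[ℤ] W))) ∧
    LinearMap.det (LinearMap.baseChange ℂ (LinearMap.id - (F : W →ₗ[ℤ] W))) =
      (Nat.card (W ⧸ LinearMap.range (LinearMap.id - (F : W →ₗ[ℤ] W))) : ℂ) := by
  rw [← Module.End.one_eq_id]
  set φ : Module.End ℤ W := 1 - F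
  have hinj : Function.Injective φ := Module.End.injective_one_sub_of_sum_pow_eq_zero hf hN
  have hpos : 0 < LinearMap.det φ := LinearMap.det_one_sub_pos hf hN
  have hcard : (Nat.card (W ⧸ LinearMap.range φ) : ℤ) = LinearMap.det φ := by
    rw [LinearMap.natCard_quotient_range_eq_natAbs_det hinj, Int.natAbs_of_nonneg hpos.le]
  refine ⟨hinj, Nat.finite_of_card_ne_zero (by omega), by omega, ?_⟩
  rw [LinearMap.det_baseChange, ← hcard, algebraMap_int_eq, eq_intCast, Int.cast_natCast]

/-- **Determinant of `1 - F` equals the index of its image.**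
`W` is a finitely generated torsion-free abelian group, `F` an automorphism of `W` with
`F ^ f = 1` (`f > 0`) and `∑_{n=0}^{f-1} Fⁿ = 0` as an endomorphism of `W`.  Then `1 - F` is
injective, its image `(1-F)(W)` has finite index in `W`, and the determinant of the induced
endomorphism `(1-F)_ℂ` of `W ⊗ ℂ` equals the index `[W : (1-F)W]`; in particular this
determinant is a positive integer. -/
theorem stmt_3 (W : Type) [AddCommGroup W] [Module.Finite ℤ W] [NoZeroSMulDivisors ℤ W]
    (f : ℕ) (hf : 0 < f) (F : W ≃ₗ[ℤ] W) (hF : F ^ f = 1)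
    (hN : (∑ n ∈ Finset.range f, (F : W →ₗ[ℤ] W) ^ n) = 0) :
    Function.Injective ⇑((LinearMap.id : W →ₗ[ℤ] W) - (F : W →ₗ[ℤ] W)) ∧
    Finite (W ⧸ LinearMap.range (LinearMap.id - (F : W →ₗ[ℤ] W))) ∧
    0 < Nat.card (W ⧸ LinearMap.range (LinearMap.id - (F : W →ₗ[ℤ] W))) ∧
    LinearMap.det (LinearMap.baseChange ℂ (LinearMap.id - (F : W →ₗ[ℤ] W))) =
      (Nat.card (W ⧸ LinearMap.range (LinearMap.id - (F : W →ₗ[ℤ] W))) : ℂ) :=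
  stmt_3_general W f hf F hN
end

section
/- Let 0 → A → B →^φ C →^ψ D → E → 0 be an exact sequence of finitely generated abelian groups in which A is finite. Then [A] · [C_tor] · [coker(ψ_tor)] = [B_tor] · [D_tor], where ψ_tor : C_tor → D_tor is the restriction of ψ to torsion subgroups and coker(ψ_tor) = D_tor/ψ(C_tor). -/
private lemma tor_map' {M N : Type} [AddCommGroup M] [AddCommGroup N]
    (f : M →ₗ[ℤ] N) {x : M} (hx : x ∈ Submodule.torsion ℤ M) :
    f x ∈ Submodule.torsion ℤ N := by
  obtain ⟨a, ha⟩ := (Submodule.mem_torsion_iff x).mp hx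
  refine (Submodule.mem_torsion_iff _).mpr ⟨a, ?_⟩
  rw [Submonoid.smul_def] at ha ⊢
  rw [← map_smul, ha, map_zero]

/-- **Lemma on orders of torsion subgroups (Lemma A.2 / `torsion_group`).**
Given an exact sequence `0 → A → B →^φ C →^ψ D → E → 0` of finitely generated abelian groups
with `A` finite, we have `[A] ⬝ [C_tor] ⬝ [coker ψ_tor] = [B_tor] ⬝ [D_tor]`, where
`ψ_tor : C_tor → D_tor` is the restriction of `ψ` to torsion subgroups and
`coker (ψ_tor) = D_tor / ψ(C_tor)`. -/
theorem stmt_4 (A B C D E : Type)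
    [AddCommGroup A] [AddCommGroup B] [AddCommGroup C] [AddCommGroup D] [AddCommGroup E]
    [Module.Finite ℤ A] [Module.Finite ℤ B] [Module.Finite ℤ C] [Module.Finite ℤ D]
    [Module.Finite ℤ E] [Finite A]
    (ι : A →ₗ[ℤ] B) (φ : B →ₗ[ℤ] C) (ψ : C →ₗ[ℤ] D) (π : D →ₗ[ℤ] E)
    (hι : Function.Injective ι)
    (h1 : LinearMap.range ι = LinearMap.ker φ)
    (h2 : LinearMap.range φ = LinearMap.ker ψ)
    (h3 : LinearMap.range ψ = LinearMap.ker π)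
    (hπ : Function.Surjective π) :
    Nat.card A * Nat.card (Submodule.torsion ℤ C) *
        Nat.card ((Submodule.torsion ℤ D) ⧸
          ((Submodule.torsion ℤ C).map ψ).comap (Submodule.torsion ℤ D).subtype) =
      Nat.card (Submodule.torsion ℤ B) * Nat.card (Submodule.torsion ℤ D) := by
  set TB := Submodule.torsion ℤ B with hTB
  set TC := Submodule.torsion ℤ C with hTC
  set TD := Submodule.torsion ℤ D with hTD
  set ψt : TC →ₗ[ℤ] TD := ψ.restrict (fun x hx => tor_map' ψ hx) with hψt
  -- range of ψt equals the comap submodule in the statement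
  have hrange : LinearMap.range ψt = (TC.map ψ).comap TD.subtype := by
    ext x
    simp only [LinearMap.mem_range, Submodule.mem_comap, Submodule.mem_map,
      Submodule.coe_subtype]
    constructor
    · rintro ⟨⟨c, hc⟩, rfl⟩
      exact ⟨c, hc, rfl⟩
    · rintro ⟨c, hc, hcx⟩
      exact ⟨⟨c, hc⟩, Subtype.ext hcx⟩
  rw [← hrange]
  -- cardinality of A as kernel of φ, and ker φ is torsion
  have hANe : (Nat.card A : ℤ) ≠ 0 := by exact_mod_cast Nat.card_pos.ne'
  have hsmul : ∀ a : A, (Nat.card A : ℤ) • (ι a) = 0 := by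
    intro a
    rw [← map_smul, natCast_zsmul, card_nsmul_eq_zero', map_zero]
  have hle : LinearMap.ker φ ≤ TB := by
    rw [← h1]
    rintro x ⟨a, rfl⟩
    exact (Submodule.mem_torsion_iff _).mpr
      ⟨⟨(Nat.card A : ℤ), mem_nonZeroDivisors_of_ne_zero hANe⟩, hsmul a⟩
  set φ' : TB →ₗ[ℤ] C := φ ∘ₗ TB.subtype with hφ'
  have hkerφ' : LinearMap.ker φ' = (LinearMap.ker φ).comap TB.subtype :=
    LinearMap.ker_comp _ _
  have hkerφ'card : Nat.card (LinearMap.ker φ') = Nat.card A := by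
    rw [hkerφ']
    rw [Nat.card_congr (Submodule.comapSubtypeEquivOfLe hle).toEquiv, ← h1]
    exact (Nat.card_congr (LinearEquiv.ofInjective ι hι).toEquiv).symm
  -- range of φ' is range φ ⊓ TC
  have hrangeφ' : LinearMap.range φ' = LinearMap.range φ ⊓ TC := by
    apply le_antisymm
    · rintro _ ⟨⟨b, hb⟩, rfl⟩
      exact ⟨⟨b, rfl⟩, tor_map' φ hb⟩
    · rintro x ⟨⟨b, rfl⟩, hx⟩
      obtain ⟨n, hn⟩ := (Submodule.mem_torsion_iff _).mp hx
      rw [Submonoid.smul_def] at hn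
      have hnb : (n : ℤ) • b ∈ LinearMap.ker φ := by
        rw [LinearMap.mem_ker, map_smul, hn]
      rw [← h1] at hnb
      obtain ⟨a, ha⟩ := hnb
      have hb : b ∈ TB := by
        refine (Submodule.mem_torsion_iff _).mpr
          ⟨⟨(Nat.card A : ℤ) * (n : ℤ),
            mul_mem (mem_nonZeroDivisors_of_ne_zero hANe) n.2⟩, ?_⟩
        rw [Submonoid.smul_def]
        show ((Nat.card A : ℤ) * (n : ℤ)) • b = 0
        rw [mul_smul, ← ha, hsmul]
      exact ⟨⟨b, hb⟩, rfl⟩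
  -- ker ψt has the same cardinality as range φ'
  have hkerψt : Nat.card (LinearMap.ker ψt) = Nat.card (LinearMap.range φ') := by
    have heq : LinearMap.ker ψt = (LinearMap.range φ ⊓ TC).comap TC.subtype := by
      ext z
      simp only [LinearMap.mem_ker, Submodule.mem_comap, Submodule.mem_inf,
        Submodule.coe_subtype, hψt]
      rw [← Subtype.coe_inj]
      simp only [LinearMap.restrict_apply, ZeroMemClass.coe_zero]
      rw [h2]
      exact ⟨fun h => ⟨h, z.2⟩, fun h => h.1⟩
    rw [heq, hrangeφ']
    exact Nat.card_congr (Submodule.comapSubtypeEquivOfLe inf_le_right).toEquiv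
  -- counting
  have hC : Nat.card TC
      = Nat.card (LinearMap.ker ψt) * Nat.card (TC ⧸ LinearMap.ker ψt) :=
    Submodule.card_eq_card_quotient_mul_card _
  have hCq : Nat.card (TC ⧸ LinearMap.ker ψt) = Nat.card (LinearMap.range ψt) :=
    Nat.card_congr ψt.quotKerEquivRange.toEquiv
  have hD : Nat.card TD
      = Nat.card (LinearMap.range ψt) * Nat.card (TD ⧸ LinearMap.range ψt) :=
    Submodule.card_eq_card_quotient_mul_card _
  have hB : Nat.card TB
      = Nat.card (LinearMap.ker φ') * Nat.card (TB ⧸ LinearMap.ker φ') :=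
    Submodule.card_eq_card_quotient_mul_card _
  have hBq : Nat.card (TB ⧸ LinearMap.ker φ') = Nat.card (LinearMap.range φ') :=
    Nat.card_congr φ'.quotKerEquivRange.toEquiv
  rw [hC, hCq, hD, hB, hBq, hkerφ'card, hkerψt]
  ring
end

section
/- Consider a commutative 3×3 diagram of finite-dimensional real vector spaces with exact rows (E_A): 0 → A_1 → A_2 → A_3 → 0, (E_B): 0 → B_1 → B_2 → B_3 → 0, (E_C): 0 → C_1 → C_2 → C_3 → 0 and exact columns (E_i): 0 → A_i → B_i → C_i → 0 for i = 1, 2, 3. Choose ordered bases for all nine spaces. Then, with respect to these bases, ν(E_2)/(ν(E_1)·ν(E_3)) = ν(E_B)/(ν(E_A)·ν(E_C)). -/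
/-!
Lifting the section `γ₃` of the column `E₃` through the row `E_B` gives `u : C₃ → B₂`; from it
one builds new sections of `E_C`, `E₂` and `E_B` (keeping those of `E_A`, `E₁`, `E₃`) for which
the two splittings of `B₂` as `(A₁ ⊕ A₃) ⊕ (C₁ ⊕ C₃)` — along the rows and then along the column
`E₂`, or along the columns and then along the row `E_B` — agree up to reordering the four
summands. The absolute determinant of such a composite splitting is the product of the three
`ν`'s involved and does not see the reordering, so `ν(E₂) ν(E_A) ν(E_C) = ν(E_B) ν(E₁) ν(E₃)`.
Since `ν` does not depend on the sections and never vanishes, the identity of quotients follows.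
-/

/-- The determinant `ν(E)` of a short exact sequence `0 → A →^φ B →^ψ C → 0` of real vector
spaces with respect to bases `bA`, `bB`, `bC`, computed using a linear section `γ` of `ψ`:
it is `|det θ_γ|` where `θ_γ : A ⊕ C → B`, `(a, c) ↦ φ a + γ c`. -/
noncomputable def nuSES {A B C : Type} [AddCommGroup A] [Module ℝ A]
    [AddCommGroup B] [Module ℝ B] [AddCommGroup C] [Module ℝ C]
    {a b c : ℕ} (h : b = a + c)
    (bB : Module.Basis (Fin b) ℝ B) (bA : Module.Basis (Fin a) ℝ A) (bC : Module.Basis (Fin c) ℝ C)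
    (φ : A →ₗ[ℝ] B) (γ : C →ₗ[ℝ] B) : ℝ :=
  |bB.det fun i => Fin.append (fun j => φ (bA j)) (fun j => γ (bC j)) (Fin.cast h i)|

open LinearMap Module

namespace LinearMap

variable {R : Type*} [Ring R] {A B C V : Type*} [AddCommGroup A] [Module R A]
  [AddCommGroup B] [Module R B] [AddCommGroup C] [Module R C] [AddCommGroup V] [Module R V]

theorem bijective_coprod_of_exact {φ : A →ₗ[R] B} {ψ : B →ₗ[R] C} {γ : C →ₗ[R] B}
    (hφ : Function.Injective φ) (hex : range φ = ker ψ) (hγ : ψ ∘ₗ γ = id) :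
    Function.Bijective (φ.coprod γ) :=
  ((Function.Exact.splitSurjectiveEquiv (exact_iff.mpr hex.symm) hφ ⟨γ, hγ⟩).1).symm.bijective

theorem exists_rightInverse_of_bijective_coprod {φ : A →ₗ[R] B} {γ : C →ₗ[R] B}
    (hE : Function.Bijective (φ.coprod γ)) {π : V →ₗ[R] B} {f : A →ₗ[R] V} {g : C →ₗ[R] V}
    (hf : π ∘ₗ f = φ) (hg : π ∘ₗ g = γ) :
    ∃ δ : B →ₗ[R] V, π ∘ₗ δ = id ∧ δ ∘ₗ φ = f ∧ δ ∘ₗ γ = g := by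
  let E := LinearEquiv.ofBijective _ hE
  refine ⟨f.coprod g ∘ₗ E.symm.toLinearMap, ?_, ?_, ?_⟩
  · rw [← comp_assoc, comp_coprod, hf, hg]
    exact E.comp_symm
  · ext a
    have : φ a = E (a, 0) := by simp [E]
    simp [this]
  · ext c
    have : γ c = E (0, c) := by simp [E]
    simp [this]

end LinearMap

namespace Module.Basis

section CommRing

variable {R : Type*} [CommRing R] {ι κ ι' κ' : Type*}
  {A C A' C' V W : Type*} [AddCommGroup A] [Module R A] [AddCommGroup C] [Module R C]
  [AddCommGroup A'] [Module R A'] [AddCommGroup C'] [Module R C']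
  [AddCommGroup V] [Module R V] [AddCommGroup W] [Module R W]

theorem reindex_trans {ι'' M : Type*} [AddCommGroup M] [Module R M] (b : Basis ι R M)
    (e : ι ≃ ι') (e' : ι' ≃ ι'') : b.reindex (e.trans e') = (b.reindex e).reindex e' := by
  ext; simp

theorem prod_reindex (bA : Basis ι R A) (bC : Basis κ R C) (eA : ι ≃ ι') (eC : κ ≃ κ') :
    (bA.reindex eA).prod (bC.reindex eC) = (bA.prod bC).reindex (Equiv.sumCongr eA eC) := by
  ext (i | i) <;> simp

theorem prod_prod_map_prodProdProdComm {ι₁ ι₃ κ₁ κ₃ A₁ A₃ C₁ C₃ : Type*}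
    [AddCommGroup A₁] [Module R A₁] [AddCommGroup A₃] [Module R A₃]
    [AddCommGroup C₁] [Module R C₁] [AddCommGroup C₃] [Module R C₃]
    (bA₁ : Basis ι₁ R A₁) (bA₃ : Basis ι₃ R A₃) (bC₁ : Basis κ₁ R C₁) (bC₃ : Basis κ₃ R C₃) :
    ((bA₁.prod bA₃).prod (bC₁.prod bC₃)).map (LinearEquiv.prodProdProdComm R A₁ A₃ C₁ C₃) =
      ((bA₁.prod bC₁).prod (bA₃.prod bC₃)).reindex (Equiv.sumSumSumComm ι₁ κ₁ ι₃ κ₃) := by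
  ext ((i | i) | (i | i)) <;> simp

variable [Fintype ι] [DecidableEq ι] [Fintype κ] [DecidableEq κ]

theorem det_comp_eq_det_comp_basis_mul (bV : Basis ι R V) (b : Basis ι R W) (F : W →ₗ[R] V)
    (v : ι → W) : bV.det (F ∘ v) = bV.det (F ∘ b) * b.det v := by
  have := congr($((bV.det.compLinearMap F).eq_smul_basis_det b) v)
  rwa [AlternatingMap.smul_apply, smul_eq_mul] at this

theorem det_reindex_comp_reindex {μ M N : Type*} [Fintype μ] [DecidableEq μ] [AddCommGroup M]
    [Module R M] [AddCommGroup N] [Module R N] (b : Basis ι R M) (bN : Basis ι R N) (e : ι ≃ μ)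
    (f : N → M) : (b.reindex e).det (f ∘ bN.reindex e) = b.det (f ∘ bN) := by
  rw [det_reindex]
  congr 1
  ext; simp

theorem det_prod_comp_prodMap (bA : Basis ι R A) (bA' : Basis ι R A') (bC : Basis κ R C)
    (bC' : Basis κ R C') (f : A →ₗ[R] A') (g : C →ₗ[R] C') :
    (bA'.prod bC').det (f.prodMap g ∘ bA.prod bC) = bA'.det (f ∘ bA) * bC'.det (g ∘ bC) := by
  rw [det_apply, det_apply, det_apply, ← Matrix.det_fromBlocks_zero₂₁ _ 0]
  congr 1
  ext (i | i) (j | j) <;> simp [toMatrix_apply]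

theorem det_prod_comp_shear (bA : Basis ι R A) (bC : Basis κ R C) (δ : C →ₗ[R] A) :
    (bA.prod bC).det ((fst R A C + δ ∘ₗ snd R A C).prod (snd R A C) ∘ bA.prod bC) = 1 := by
  calc _ = (Matrix.fromBlocks (1 : Matrix ι ι R) (bA.toMatrix (δ ∘ bC)) 0 1).det := by
        rw [det_apply]
        congr 1
        ext (i | i) (j | j) <;>
          simp [toMatrix_apply, Matrix.one_apply, Finsupp.single_apply, eq_comm]
    _ = 1 := by simp

end CommRing

section Ordered

variable {R : Type*} [CommRing R] [LinearOrder R] {ι μ : Type*}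
  [Fintype μ] [DecidableEq μ]
  {V W : Type*} [AddCommGroup V] [Module R V] [AddCommGroup W] [Module R W]

theorem abs_det_comp_perm (b : Basis μ R V) (v : μ → V) (σ : Equiv.Perm μ) :
    |b.det (v ∘ σ)| = |b.det v| := by
  rcases Int.units_eq_one_or (Equiv.Perm.sign σ) with hσ | hσ <;>
    simp [AlternatingMap.map_perm, hσ, Units.smul_def]

theorem abs_det_comp_reindex_eq (bV : Basis μ R V) (F : W →ₗ[R] V) (b : Basis ι R W)
    (e e' : ι ≃ μ) : |bV.det (F ∘ b.reindex e)| = |bV.det (F ∘ b.reindex e')| := by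
  have : F ∘ b.reindex e = (F ∘ b.reindex e') ∘ (e.symm.trans e') := by
    ext i; simp
  rw [this, abs_det_comp_perm]

end Ordered

end Module.Basis

section Nu

variable {A B C : Type} [AddCommGroup A] [Module ℝ A] [AddCommGroup B] [Module ℝ B]
  [AddCommGroup C] [Module ℝ C] {a b c : ℕ}

theorem nuSES_eq_abs_det (h : b = a + c) (bB : Basis (Fin b) ℝ B) (bA : Basis (Fin a) ℝ A)
    (bC : Basis (Fin c) ℝ C) (φ : A →ₗ[ℝ] B) (γ : C →ₗ[ℝ] B) (e : Fin a ⊕ Fin c ≃ Fin b) :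
    nuSES h bB bA bC φ γ = |bB.det (φ.coprod γ ∘ (bA.prod bC).reindex e)| := by
  rw [Basis.abs_det_comp_reindex_eq _ _ _ e (finSumFinEquiv.trans (finCongr h.symm)), nuSES]
  congr 2
  ext i
  obtain ⟨s, rfl⟩ := (finSumFinEquiv.trans (finCongr h.symm)).surjective i
  rcases s with j | j <;> simp

theorem nuSES_eq_of_sections (h : b = a + c) (bB : Basis (Fin b) ℝ B) (bA : Basis (Fin a) ℝ A)
    (bC : Basis (Fin c) ℝ C) {φ : A →ₗ[ℝ] B} {ψ : B →ₗ[ℝ] C} (hφ : Function.Injective φ)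
    (hex : range φ = ker ψ) {γ γ' : C →ₗ[ℝ] B} (hγ : ψ ∘ₗ γ = LinearMap.id)
    (hγ' : ψ ∘ₗ γ' = LinearMap.id) :
    nuSES h bB bA bC φ γ = nuSES h bB bA bC φ γ' := by
  have hmem : ∀ x, (γ - γ') x ∈ range φ := fun x => by
    simp [hex, ← comp_apply ψ, hγ, hγ']
  set δ := codRestrictOfInjective (γ - γ') φ hφ hmem
  have hshear : φ.coprod γ = φ.coprod γ' ∘ₗ (fst ℝ A C + δ ∘ₗ snd ℝ A C).prod (snd ℝ A C) := by
    ext x <;> simp [δ]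
  let e := finSumFinEquiv.trans (finCongr h.symm)
  rw [nuSES_eq_abs_det h _ _ _ _ _ e, nuSES_eq_abs_det h _ _ _ _ _ e, hshear, coe_comp,
    Function.comp_assoc, Basis.det_comp_eq_det_comp_basis_mul _ ((bA.prod bC).reindex e),
    Basis.det_reindex_comp_reindex, Basis.det_prod_comp_shear, mul_one]

theorem nuSES_ne_zero (h : b = a + c) (bB : Basis (Fin b) ℝ B) (bA : Basis (Fin a) ℝ A)
    (bC : Basis (Fin c) ℝ C) {φ : A →ₗ[ℝ] B} {ψ : B →ₗ[ℝ] C} (hφ : Function.Injective φ)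
    (hex : range φ = ker ψ) {γ : C →ₗ[ℝ] B} (hγ : ψ ∘ₗ γ = LinearMap.id) :
    nuSES h bB bA bC φ γ ≠ 0 := by
  let E := LinearEquiv.ofBijective _ (bijective_coprod_of_exact hφ hex hγ)
  let e := finSumFinEquiv.trans (finCongr h.symm)
  have : φ.coprod γ ∘ (bA.prod bC).reindex e = ((bA.prod bC).reindex e).map E := by
    ext; simp [E]
  rw [nuSES_eq_abs_det h _ _ _ _ _ e, abs_ne_zero, this]
  exact (bB.isUnit_det _).ne_zero

theorem abs_det_comp_prodMap_eq_nuSES_mul {A₁ A₃ C₁ C₃ : Type}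
    [AddCommGroup A₁] [Module ℝ A₁] [AddCommGroup A₃] [Module ℝ A₃]
    [AddCommGroup C₁] [Module ℝ C₁] [AddCommGroup C₃] [Module ℝ C₃] {a₁ a₃ c₁ c₃ : ℕ}
    (h : b = a + c) (ha : a = a₁ + a₃) (hc : c = c₁ + c₃)
    (bB : Basis (Fin b) ℝ B) (bA : Basis (Fin a) ℝ A) (bC : Basis (Fin c) ℝ C)
    (bA₁ : Basis (Fin a₁) ℝ A₁) (bA₃ : Basis (Fin a₃) ℝ A₃)
    (bC₁ : Basis (Fin c₁) ℝ C₁) (bC₃ : Basis (Fin c₃) ℝ C₃)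
    (θ : A →ₗ[ℝ] B) (γ : C →ₗ[ℝ] B) (φA : A₁ →ₗ[ℝ] A) (γA : A₃ →ₗ[ℝ] A)
    (φC : C₁ →ₗ[ℝ] C) (γC : C₃ →ₗ[ℝ] C) (e : (Fin a₁ ⊕ Fin a₃) ⊕ (Fin c₁ ⊕ Fin c₃) ≃ Fin b) :
    |bB.det ((θ.coprod γ ∘ₗ (φA.coprod γA).prodMap (φC.coprod γC)) ∘
        ((bA₁.prod bA₃).prod (bC₁.prod bC₃)).reindex e)| =
      nuSES h bB bA bC θ γ * (nuSES ha bA bA₁ bA₃ φA γA * nuSES hc bC bC₁ bC₃ φC γC) := by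
  let eA := finSumFinEquiv.trans (finCongr ha.symm)
  let eC := finSumFinEquiv.trans (finCongr hc.symm)
  let e' := finSumFinEquiv.trans (finCongr h.symm)
  rw [Basis.abs_det_comp_reindex_eq _ _ _ e ((Equiv.sumCongr eA eC).trans e'),
    Basis.reindex_trans, ← Basis.prod_reindex, coe_comp, Function.comp_assoc,
    Basis.det_comp_eq_det_comp_basis_mul _ ((bA.prod bC).reindex e'),
    Basis.det_reindex_comp_reindex, Basis.det_prod_comp_prodMap, abs_mul, abs_mul,
    nuSES_eq_abs_det h _ _ _ _ _ e', nuSES_eq_abs_det ha _ _ _ _ _ eA,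
    nuSES_eq_abs_det hc _ _ _ _ _ eC]

end Nu

section ThreeByThree

variable {R : Type*} [Ring R] {A₁ A₂ A₃ B₁ B₂ B₃ C₁ C₂ C₃ : Type*}
  [AddCommGroup A₁] [Module R A₁] [AddCommGroup A₂] [Module R A₂] [AddCommGroup A₃] [Module R A₃]
  [AddCommGroup B₁] [Module R B₁] [AddCommGroup B₂] [Module R B₂] [AddCommGroup B₃] [Module R B₃]
  [AddCommGroup C₁] [Module R C₁] [AddCommGroup C₂] [Module R C₂] [AddCommGroup C₃] [Module R C₃]
  {φA : A₁ →ₗ[R] A₂} {ψA : A₂ →ₗ[R] A₃} {φB : B₁ →ₗ[R] B₂} {ψB : B₂ →ₗ[R] B₃}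
  {φC : C₁ →ₗ[R] C₂} {ψC : C₂ →ₗ[R] C₃} {θ₁ : A₁ →ₗ[R] B₁} {τ₁ : B₁ →ₗ[R] C₁}
  {θ₂ : A₂ →ₗ[R] B₂} {τ₂ : B₂ →ₗ[R] C₂} {θ₃ : A₃ →ₗ[R] B₃} {τ₃ : B₃ →ₗ[R] C₃}

theorem exists_sections_coprod_comp_prodMap_eq (hφC : Function.Injective φC)
    (hexC : range φC = ker ψC) (hθ₃ : Function.Injective θ₃) (hex₃ : range θ₃ = ker τ₃)
    (hcomm₁ : θ₂ ∘ₗ φA = φB ∘ₗ θ₁) (hcomm₂ : θ₃ ∘ₗ ψA = ψB ∘ₗ θ₂)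
    (hcomm₃ : τ₂ ∘ₗ φB = φC ∘ₗ τ₁) (hcomm₄ : τ₃ ∘ₗ ψB = ψC ∘ₗ τ₂)
    {γA : A₃ →ₗ[R] A₂} (hγA : ψA ∘ₗ γA = LinearMap.id)
    {γB : B₃ →ₗ[R] B₂} (hγB : ψB ∘ₗ γB = LinearMap.id)
    {γ₁ : C₁ →ₗ[R] B₁} (hγ₁ : τ₁ ∘ₗ γ₁ = LinearMap.id)
    {γ₃ : C₃ →ₗ[R] B₃} (hγ₃ : τ₃ ∘ₗ γ₃ = LinearMap.id) :
    ∃ (γC : C₃ →ₗ[R] C₂) (γ₂ : C₂ →ₗ[R] B₂) (γB' : B₃ →ₗ[R] B₂),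
      ψC ∘ₗ γC = LinearMap.id ∧ τ₂ ∘ₗ γ₂ = LinearMap.id ∧ ψB ∘ₗ γB' = LinearMap.id ∧
      θ₂.coprod γ₂ ∘ₗ (φA.coprod γA).prodMap (φC.coprod γC) =
        φB.coprod γB' ∘ₗ (θ₁.coprod γ₁).prodMap (θ₃.coprod γ₃) ∘ₗ
          (LinearEquiv.prodProdProdComm R A₁ A₃ C₁ C₃).toLinearMap := by
  set u := γB ∘ₗ γ₃
  have hu : ψB ∘ₗ u = γ₃ := by rw [← comp_assoc, hγB, id_comp]
  have hγC : ψC ∘ₗ (τ₂ ∘ₗ u) = LinearMap.id := by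
    rw [← comp_assoc, ← hcomm₄, comp_assoc, hu, hγ₃]
  obtain ⟨γ₂, hγ₂, hγ₂φC, hγ₂γC⟩ :=
    exists_rightInverse_of_bijective_coprod (bijective_coprod_of_exact hφC hexC hγC)
      (f := φB ∘ₗ γ₁) (by rw [← comp_assoc, hcomm₃, comp_assoc, hγ₁, comp_id]) rfl
  obtain ⟨γB', hγB', hγB'θ₃, hγB'γ₃⟩ :=
    exists_rightInverse_of_bijective_coprod (bijective_coprod_of_exact hθ₃ hex₃ hγ₃)
      (f := θ₂ ∘ₗ γA) (by rw [← comp_assoc, ← hcomm₂, comp_assoc, hγA, comp_id]) hu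
  refine ⟨τ₂ ∘ₗ u, γ₂, γB', hγC, hγ₂, hγB', ?_⟩
  ext x
  · simpa using LinearMap.congr_fun hcomm₁ x
  · simpa using (LinearMap.congr_fun hγB'θ₃ x).symm
  · simpa using LinearMap.congr_fun hγ₂φC x
  · simpa using (LinearMap.congr_fun hγ₂γC x).trans (LinearMap.congr_fun hγB'γ₃ x).symm

end ThreeByThree

theorem nuSES_mul_eq_of_coprod_comp_prodMap_eq {A₁ A₂ A₃ B₁ B₂ B₃ C₁ C₂ C₃ : Type}
    [AddCommGroup A₁] [Module ℝ A₁] [AddCommGroup A₂] [Module ℝ A₂]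
    [AddCommGroup A₃] [Module ℝ A₃] [AddCommGroup B₁] [Module ℝ B₁]
    [AddCommGroup B₂] [Module ℝ B₂] [AddCommGroup B₃] [Module ℝ B₃]
    [AddCommGroup C₁] [Module ℝ C₁] [AddCommGroup C₂] [Module ℝ C₂]
    [AddCommGroup C₃] [Module ℝ C₃] {a₁ a₂ a₃ b₁ b₂ b₃ c₁ c₂ c₃ : ℕ}
    (ha : a₂ = a₁ + a₃) (hb : b₂ = b₁ + b₃) (hc : c₂ = c₁ + c₃)
    (h₁ : b₁ = a₁ + c₁) (h₂ : b₂ = a₂ + c₂) (h₃ : b₃ = a₃ + c₃)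
    (bA₁ : Basis (Fin a₁) ℝ A₁) (bA₂ : Basis (Fin a₂) ℝ A₂) (bA₃ : Basis (Fin a₃) ℝ A₃)
    (bB₁ : Basis (Fin b₁) ℝ B₁) (bB₂ : Basis (Fin b₂) ℝ B₂) (bB₃ : Basis (Fin b₃) ℝ B₃)
    (bC₁ : Basis (Fin c₁) ℝ C₁) (bC₂ : Basis (Fin c₂) ℝ C₂) (bC₃ : Basis (Fin c₃) ℝ C₃)
    (φA : A₁ →ₗ[ℝ] A₂) (γA : A₃ →ₗ[ℝ] A₂) (φB : B₁ →ₗ[ℝ] B₂) (γB : B₃ →ₗ[ℝ] B₂)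
    (φC : C₁ →ₗ[ℝ] C₂) (γC : C₃ →ₗ[ℝ] C₂) (θ₁ : A₁ →ₗ[ℝ] B₁) (γ₁ : C₁ →ₗ[ℝ] B₁)
    (θ₂ : A₂ →ₗ[ℝ] B₂) (γ₂ : C₂ →ₗ[ℝ] B₂) (θ₃ : A₃ →ₗ[ℝ] B₃) (γ₃ : C₃ →ₗ[ℝ] B₃)
    (hsplit : θ₂.coprod γ₂ ∘ₗ (φA.coprod γA).prodMap (φC.coprod γC) =
      φB.coprod γB ∘ₗ (θ₁.coprod γ₁).prodMap (θ₃.coprod γ₃) ∘ₗ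
        (LinearEquiv.prodProdProdComm ℝ A₁ A₃ C₁ C₃).toLinearMap) :
    nuSES h₂ bB₂ bA₂ bC₂ θ₂ γ₂ * (nuSES ha bA₂ bA₁ bA₃ φA γA * nuSES hc bC₂ bC₁ bC₃ φC γC) =
      nuSES hb bB₂ bB₁ bB₃ φB γB * (nuSES h₁ bB₁ bA₁ bC₁ θ₁ γ₁ * nuSES h₃ bB₃ bA₃ bC₃ θ₃ γ₃) := by
  let e : (Fin a₁ ⊕ Fin a₃) ⊕ (Fin c₁ ⊕ Fin c₃) ≃ Fin b₂ :=
    Fintype.equivFinOfCardEq (by simp; omega)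
  have hbasis : ⇑(LinearEquiv.prodProdProdComm ℝ A₁ A₃ C₁ C₃) ∘
        ((bA₁.prod bA₃).prod (bC₁.prod bC₃)).reindex e =
      ((bA₁.prod bC₁).prod (bA₃.prod bC₃)).reindex ((Equiv.sumSumSumComm _ _ _ _).trans e) := by
    rw [Basis.reindex_trans, ← Basis.prod_prod_map_prodProdProdComm]
    funext i
    simp
  rw [← abs_det_comp_prodMap_eq_nuSES_mul h₂ ha hc _ _ _ _ _ _ _ _ _ _ _ _ _ e,
    ← abs_det_comp_prodMap_eq_nuSES_mul hb h₁ h₃ _ _ _ _ _ _ _ _ _ _ _ _ _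
      ((Equiv.sumSumSumComm _ _ _ _).trans e), hsplit, coe_comp, coe_comp,
    LinearEquiv.coe_coe, Function.comp_assoc, Function.comp_assoc, hbasis, ← Function.comp_assoc,
    ← coe_comp]

theorem stmt_8_general (A₁ A₂ A₃ B₁ B₂ B₃ C₁ C₂ C₃ : Type)
    [AddCommGroup A₁] [Module ℝ A₁] [AddCommGroup A₂] [Module ℝ A₂]
    [AddCommGroup A₃] [Module ℝ A₃] [AddCommGroup B₁] [Module ℝ B₁]
    [AddCommGroup B₂] [Module ℝ B₂] [AddCommGroup B₃] [Module ℝ B₃]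
    [AddCommGroup C₁] [Module ℝ C₁] [AddCommGroup C₂] [Module ℝ C₂]
    [AddCommGroup C₃] [Module ℝ C₃]
    -- rows
    (φA : A₁ →ₗ[ℝ] A₂) (ψA : A₂ →ₗ[ℝ] A₃)
    (φB : B₁ →ₗ[ℝ] B₂) (ψB : B₂ →ₗ[ℝ] B₃)
    (φC : C₁ →ₗ[ℝ] C₂) (ψC : C₂ →ₗ[ℝ] C₃)
    -- columns
    (θ₁ : A₁ →ₗ[ℝ] B₁) (τ₁ : B₁ →ₗ[ℝ] C₁)
    (θ₂ : A₂ →ₗ[ℝ] B₂) (τ₂ : B₂ →ₗ[ℝ] C₂)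
    (θ₃ : A₃ →ₗ[ℝ] B₃) (τ₃ : B₃ →ₗ[ℝ] C₃)
    -- exactness of the rows
    (hφA : Function.Injective φA)
    (hexA : LinearMap.range φA = LinearMap.ker ψA)
    (hφB : Function.Injective φB)
    (hexB : LinearMap.range φB = LinearMap.ker ψB)
    (hφC : Function.Injective φC)
    (hexC : LinearMap.range φC = LinearMap.ker ψC)
    -- exactness of the columns
    (hθ₁ : Function.Injective θ₁)
    (hex₁ : LinearMap.range θ₁ = LinearMap.ker τ₁)
    (hθ₂ : Function.Injective θ₂)
    (hex₂ : LinearMap.range θ₂ = LinearMap.ker τ₂)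
    (hθ₃ : Function.Injective θ₃)
    (hex₃ : LinearMap.range θ₃ = LinearMap.ker τ₃)
    -- commutativity of the diagram
    (hcomm₁ : θ₂.comp φA = φB.comp θ₁) (hcomm₂ : θ₃.comp ψA = ψB.comp θ₂)
    (hcomm₃ : τ₂.comp φB = φC.comp τ₁) (hcomm₄ : τ₃.comp ψB = ψC.comp τ₂)
    -- bases
    (a₁ a₂ a₃ b₁ b₂ b₃ c₁ c₂ c₃ : ℕ)
    (ha : a₂ = a₁ + a₃) (hb : b₂ = b₁ + b₃) (hc : c₂ = c₁ + c₃)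
    (h₁ : b₁ = a₁ + c₁) (h₂ : b₂ = a₂ + c₂) (h₃ : b₃ = a₃ + c₃)
    (bA₁ : Module.Basis (Fin a₁) ℝ A₁) (bA₂ : Module.Basis (Fin a₂) ℝ A₂) (bA₃ : Module.Basis (Fin a₃) ℝ A₃)
    (bB₁ : Module.Basis (Fin b₁) ℝ B₁) (bB₂ : Module.Basis (Fin b₂) ℝ B₂) (bB₃ : Module.Basis (Fin b₃) ℝ B₃)
    (bC₁ : Module.Basis (Fin c₁) ℝ C₁) (bC₂ : Module.Basis (Fin c₂) ℝ C₂) (bC₃ : Module.Basis (Fin c₃) ℝ C₃)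
    -- sections
    (γA : A₃ →ₗ[ℝ] A₂) (hγA : ψA.comp γA = LinearMap.id)
    (γB : B₃ →ₗ[ℝ] B₂) (hγB : ψB.comp γB = LinearMap.id)
    (γC : C₃ →ₗ[ℝ] C₂) (hγC : ψC.comp γC = LinearMap.id)
    (γ₁ : C₁ →ₗ[ℝ] B₁) (hγ₁ : τ₁.comp γ₁ = LinearMap.id)
    (γ₂ : C₂ →ₗ[ℝ] B₂) (hγ₂ : τ₂.comp γ₂ = LinearMap.id)
    (γ₃ : C₃ →ₗ[ℝ] B₃) (hγ₃ : τ₃.comp γ₃ = LinearMap.id) :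
    nuSES h₂ bB₂ bA₂ bC₂ θ₂ γ₂ / (nuSES h₁ bB₁ bA₁ bC₁ θ₁ γ₁ * nuSES h₃ bB₃ bA₃ bC₃ θ₃ γ₃) =
      nuSES hb bB₂ bB₁ bB₃ φB γB /
        (nuSES ha bA₂ bA₁ bA₃ φA γA * nuSES hc bC₂ bC₁ bC₃ φC γC) := by
  obtain ⟨γC', γ₂', γB', hγC', hγ₂', hγB', hsplit⟩ :=
    exists_sections_coprod_comp_prodMap_eq hφC hexC hθ₃ hex₃ hcomm₁ hcomm₂ hcomm₃ hcomm₄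
      hγA hγB hγ₁ hγ₃
  have hden₁₃ := mul_ne_zero (nuSES_ne_zero h₁ bB₁ bA₁ bC₁ hθ₁ hex₁ hγ₁)
    (nuSES_ne_zero h₃ bB₃ bA₃ bC₃ hθ₃ hex₃ hγ₃)
  have hdenAC := mul_ne_zero (nuSES_ne_zero ha bA₂ bA₁ bA₃ hφA hexA hγA)
    (nuSES_ne_zero hc bC₂ bC₁ bC₃ hφC hexC hγC)
  rw [div_eq_div_iff hden₁₃ hdenAC, nuSES_eq_of_sections h₂ bB₂ bA₂ bC₂ hθ₂ hex₂ hγ₂ hγ₂',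
    nuSES_eq_of_sections hb bB₂ bB₁ bB₃ hφB hexB hγB hγB',
    nuSES_eq_of_sections hc bC₂ bC₁ bC₃ hφC hexC hγC hγC']
  exact nuSES_mul_eq_of_coprod_comp_prodMap_eq ha hb hc h₁ h₂ h₃ bA₁ bA₂ bA₃ bB₁ bB₂ bB₃
    bC₁ bC₂ bC₃ φA γA φB γB' φC γC' θ₁ γ₁ θ₂ γ₂' θ₃ γ₃ hsplit

/-- **Lemma `det_3x3`.**  Given a commutative 3×3 diagram of finite-dimensional real vector
spaces with exact rows `(E_A), (E_B), (E_C)` and exact columns `(E₁), (E₂), (E₃)`, and chosen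
ordered bases for all nine spaces, one has
`ν(E₂) / (ν(E₁)⬝ν(E₃)) = ν(E_B) / (ν(E_A)⬝ν(E_C))`, where each `ν` is computed via any linear
section of the corresponding surjection. -/
theorem stmt_8 (A₁ A₂ A₃ B₁ B₂ B₃ C₁ C₂ C₃ : Type)
    [AddCommGroup A₁] [Module ℝ A₁] [AddCommGroup A₂] [Module ℝ A₂]
    [AddCommGroup A₃] [Module ℝ A₃] [AddCommGroup B₁] [Module ℝ B₁]
    [AddCommGroup B₂] [Module ℝ B₂] [AddCommGroup B₃] [Module ℝ B₃]
    [AddCommGroup C₁] [Module ℝ C₁] [AddCommGroup C₂] [Module ℝ C₂]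
    [AddCommGroup C₃] [Module ℝ C₃]
    -- rows
    (φA : A₁ →ₗ[ℝ] A₂) (ψA : A₂ →ₗ[ℝ] A₃)
    (φB : B₁ →ₗ[ℝ] B₂) (ψB : B₂ →ₗ[ℝ] B₃)
    (φC : C₁ →ₗ[ℝ] C₂) (ψC : C₂ →ₗ[ℝ] C₃)
    -- columns
    (θ₁ : A₁ →ₗ[ℝ] B₁) (τ₁ : B₁ →ₗ[ℝ] C₁)
    (θ₂ : A₂ →ₗ[ℝ] B₂) (τ₂ : B₂ →ₗ[ℝ] C₂)
    (θ₃ : A₃ →ₗ[ℝ] B₃) (τ₃ : B₃ →ₗ[ℝ] C₃)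
    -- exactness of the rows
    (hφA : Function.Injective φA) (hψA : Function.Surjective ψA)
    (hexA : LinearMap.range φA = LinearMap.ker ψA)
    (hφB : Function.Injective φB) (hψB : Function.Surjective ψB)
    (hexB : LinearMap.range φB = LinearMap.ker ψB)
    (hφC : Function.Injective φC) (hψC : Function.Surjective ψC)
    (hexC : LinearMap.range φC = LinearMap.ker ψC)
    -- exactness of the columns
    (hθ₁ : Function.Injective θ₁) (hτ₁ : Function.Surjective τ₁)
    (hex₁ : LinearMap.range θ₁ = LinearMap.ker τ₁)
    (hθ₂ : Function.Injective θ₂) (hτ₂ : Function.Surjective τ₂)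
    (hex₂ : LinearMap.range θ₂ = LinearMap.ker τ₂)
    (hθ₃ : Function.Injective θ₃) (hτ₃ : Function.Surjective τ₃)
    (hex₃ : LinearMap.range θ₃ = LinearMap.ker τ₃)
    -- commutativity of the diagram
    (hcomm₁ : θ₂.comp φA = φB.comp θ₁) (hcomm₂ : θ₃.comp ψA = ψB.comp θ₂)
    (hcomm₃ : τ₂.comp φB = φC.comp τ₁) (hcomm₄ : τ₃.comp ψB = ψC.comp τ₂)
    -- bases
    (a₁ a₂ a₃ b₁ b₂ b₃ c₁ c₂ c₃ : ℕ)
    (ha : a₂ = a₁ + a₃) (hb : b₂ = b₁ + b₃) (hc : c₂ = c₁ + c₃)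
    (h₁ : b₁ = a₁ + c₁) (h₂ : b₂ = a₂ + c₂) (h₃ : b₃ = a₃ + c₃)
    (bA₁ : Module.Basis (Fin a₁) ℝ A₁) (bA₂ : Module.Basis (Fin a₂) ℝ A₂) (bA₃ : Module.Basis (Fin a₃) ℝ A₃)
    (bB₁ : Module.Basis (Fin b₁) ℝ B₁) (bB₂ : Module.Basis (Fin b₂) ℝ B₂) (bB₃ : Module.Basis (Fin b₃) ℝ B₃)
    (bC₁ : Module.Basis (Fin c₁) ℝ C₁) (bC₂ : Module.Basis (Fin c₂) ℝ C₂) (bC₃ : Module.Basis (Fin c₃) ℝ C₃)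
    -- sections
    (γA : A₃ →ₗ[ℝ] A₂) (hγA : ψA.comp γA = LinearMap.id)
    (γB : B₃ →ₗ[ℝ] B₂) (hγB : ψB.comp γB = LinearMap.id)
    (γC : C₃ →ₗ[ℝ] C₂) (hγC : ψC.comp γC = LinearMap.id)
    (γ₁ : C₁ →ₗ[ℝ] B₁) (hγ₁ : τ₁.comp γ₁ = LinearMap.id)
    (γ₂ : C₂ →ₗ[ℝ] B₂) (hγ₂ : τ₂.comp γ₂ = LinearMap.id)
    (γ₃ : C₃ →ₗ[ℝ] B₃) (hγ₃ : τ₃.comp γ₃ = LinearMap.id) :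
    nuSES h₂ bB₂ bA₂ bC₂ θ₂ γ₂ / (nuSES h₁ bB₁ bA₁ bC₁ θ₁ γ₁ * nuSES h₃ bB₃ bA₃ bC₃ θ₃ γ₃) =
      nuSES hb bB₂ bB₁ bB₃ φB γB /
        (nuSES ha bA₂ bA₁ bA₃ φA γA * nuSES hc bC₂ bC₁ bC₃ φC γC) :=
  stmt_8_general A₁ A₂ A₃ B₁ B₂ B₃ C₁ C₂ C₃ φA ψA φB ψB φC ψC θ₁ τ₁ θ₂ τ₂ θ₃ τ₃ hφA hexA hφB hexB
    hφC hexC hθ₁ hex₁ hθ₂ hex₂ hθ₃ hex₃ hcomm₁ hcomm₂ hcomm₃ hcomm₄ a₁ a₂ a₃ b₁ b₂ b₃ c₁ c₂ c₃ ha hb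
    hc h₁ h₂ h₃ bA₁ bA₂ bA₃ bB₁ bB₂ bB₃ bC₁ bC₂ bC₃ γA hγA γB hγB γC hγC γ₁ hγ₁ γ₂ hγ₂ γ₃ hγ₃
end
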